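/- Let K be a cubical subcomplex of I^n, X a topological space (or smooth manifold), f : K → X a continuous (smooth) map and 0 < σ < ε ≤ 1/2. Define g = f ∘ (T_{σ,ε}^n restricted to K). Then g is a well-defined σ-tame map K → X, and H(v,t) = f((1-t)v + t·T_{σ,ε}^n(v)) defines a homotopy from f to g which is stationary on the ε-chamber K(ε). If moreover f is ε-tame on a subcomplex L ⊆ K, then g = f on L, so the homotopy is relative to L ∪ K(ε). -/

import Mathlib

def cube (n : ℕ) : Set (Fin n → ℝ) := {t | ∀ j, t j ∈ Set.Icc (0 : ℝ) 1}

def face {n : ℕ} (c : Fin n → Option Bool) : Set (Fin n → ℝ) :=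
  {t | ∀ j, (c j).elim (t j ∈ Set.Icc (0 : ℝ) 1) (fun b => t j = if b then 1 else 0)}

def faceChamber {n : ℕ} (ε : ℝ) (c : Fin n → Option Bool) : Set (Fin n → ℝ) :=
  {t | ∀ j, (c j).elim (t j ∈ Set.Icc ε (1 - ε)) (fun b => t j = if b then 1 else 0)}

def complexOf {n : ℕ} (S : Set (Fin n → Option Bool)) : Set (Fin n → ℝ) :=
  ⋃ c ∈ S, face c

def chamberOf {n : ℕ} (ε : ℝ) (S : Set (Fin n → Option Bool)) : Set (Fin n → ℝ) :=
  ⋃ c ∈ {c ∈ S | ∀ c' ∈ S, face c ⊆ face c' → face c = face c'}, faceChamber ε c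

def IsTameOn {n : ℕ} {X : Type*} (ε : ℝ) (f : (Fin n → ℝ) → X)
    (K : Set (Fin n → ℝ)) : Prop :=
  ∀ t ∈ K, ∀ (j : Fin n) (b : Bool), |t j - (if b then 1 else 0)| ≤ ε →
    Function.update t j (if b then (1 : ℝ) else 0) ∈ K →
    f t = f (Function.update t j (if b then (1 : ℝ) else 0))

/-- Each coordinate of a point of a face lies in `[0,1]`. -/
lemma face_apply_mem {n : ℕ} {c : Fin n → Option Bool} {t : Fin n → ℝ}
    (ht : t ∈ face c) (j : Fin n) : t j ∈ Set.Icc (0:ℝ) 1 := by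
  have h := ht j
  cases hcj : c j with
  | none => rw [hcj] at h; simpa using h
  | some b =>
    rw [hcj] at h; simp only [Option.elim] at h
    rw [h]; cases b <;> norm_num

/-- Updating a coordinate with a value satisfying the face condition stays in the face. -/
lemma update_mem_face {n : ℕ} {c : Fin n → Option Bool} {t : Fin n → ℝ}
    (ht : t ∈ face c) (j : Fin n) (x : ℝ)
    (hx : (c j).elim (x ∈ Set.Icc (0:ℝ) 1) (fun b => x = if b then 1 else 0)) :
    Function.update t j x ∈ face c := by
  intro j'
  rcases eq_or_ne j' j with h | h
  · subst h; simpa [Function.update_self] using hx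
  · rw [Function.update_of_ne h]; exact ht j'

/-- If two points of a face agree coordinatewise up to being jointly `ε`-close to
the same end of `[0,1]`, an `ε`-tame map takes the same value at them. -/
lemma tame_pair {n : ℕ} {X : Type*} (ε : ℝ) (hε0 : 0 < ε) (hε : ε ≤ 1/2)
    (f : (Fin n → ℝ) → X) (L : Set (Fin n → ℝ)) (htame : IsTameOn ε f L)
    (c : Fin n → Option Bool) (hsub : face c ⊆ L)
    (s t : Fin n → ℝ) (hs : s ∈ face c) (ht : t ∈ face c)
    (hrel : ∀ j, s j = t j ∨ (s j ≤ ε ∧ t j ≤ ε) ∨ (1 - ε ≤ s j ∧ 1 - ε ≤ t j)) :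
    f s = f t := by
  set mix : ℕ → (Fin n → ℝ) := fun k j => if (j : ℕ) < k then t j else s j with hmixdef
  have hmix : ∀ k, mix k ∈ face c := by
    intro k j
    have hsj := hs j
    have htj := ht j
    cases hcj : c j with
    | none =>
      rw [hcj] at hsj htj
      simp only [Option.elim] at hsj htj ⊢
      by_cases h : (j : ℕ) < k
      · simpa [hmixdef, h] using htj
      · simpa [hmixdef, h] using hsj
    | some b =>
      rw [hcj] at hsj htj
      simp only [Option.elim] at hsj htj ⊢
      by_cases h : (j : ℕ) < k
      · simpa [hmixdef, h] using htj
      · simpa [hmixdef, h] using hsj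
  have key : ∀ k, k ≤ n → f s = f (mix k) := by
    intro k
    induction k with
    | zero =>
      intro _
      have : mix 0 = s := by funext j; simp [hmixdef]
      rw [this]
    | succ k ih =>
      intro hk1
      have hk : k < n := hk1
      have ihk := ih (le_of_lt hk)
      set j₀ : Fin n := ⟨k, hk⟩ with hj₀
      have hmk : mix k j₀ = s j₀ := by simp [hmixdef, hj₀]
      have hmk1 : mix (k+1) j₀ = t j₀ := by simp [hmixdef, hj₀]
      have hupd : mix (k+1) = Function.update (mix k) j₀ (t j₀) := by
        funext j
        rcases eq_or_ne j j₀ with h | h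
        · subst h; simp [hmixdef, Function.update_self, hj₀]
        · have hjk : (j : ℕ) ≠ k := fun hh => h (Fin.ext hh)
          rw [Function.update_of_ne h]
          have hiff : ((j : ℕ) < k + 1) ↔ ((j : ℕ) < k) := by omega
          simp [hmixdef, hiff]
      have hs0 : (0:ℝ) ≤ s j₀ := (face_apply_mem hs j₀).1
      have hs1 : s j₀ ≤ 1 := (face_apply_mem hs j₀).2
      have ht0 : (0:ℝ) ≤ t j₀ := (face_apply_mem ht j₀).1
      have ht1 : t j₀ ≤ 1 := (face_apply_mem ht j₀).2
      rcases hrel j₀ with heq | ⟨hse, hte⟩ | ⟨hse, hte⟩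
      · have : mix (k+1) = mix k := by
          rw [hupd, ← heq, ← hmk, Function.update_eq_self]
        rw [this]; exact ihk
      · -- both near 0 : push both to 0
        have hface0 : (c j₀).elim ((0:ℝ) ∈ Set.Icc (0:ℝ) 1) (fun b => (0:ℝ) = if b then 1 else 0) := by
          cases hcj : c j₀ with
          | none => simp only [Option.elim]; norm_num
          | some b =>
            have hsj := hs j₀
            rw [hcj] at hsj
            simp only [Option.elim] at hsj ⊢
            cases b with
            | false => simp
            | true => norm_num at hsj; rw [hsj] at hse; linarith
        have e1 := htame (mix k) (hsub (hmix k)) j₀ false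
          (by simp only [if_neg Bool.false_ne_true, Bool.false_eq_true, if_false, sub_zero]
              rw [hmk]; exact abs_le.mpr ⟨by linarith, hse⟩)
          (by simp only [Bool.false_eq_true, if_false]
              exact hsub (update_mem_face (hmix k) j₀ 0 hface0))
        have e2 := htame (mix (k+1)) (hsub (hmix (k+1))) j₀ false
          (by simp only [Bool.false_eq_true, if_false, sub_zero]
              rw [hmk1]; exact abs_le.mpr ⟨by linarith, hte⟩)
          (by simp only [Bool.false_eq_true, if_false]
              exact hsub (update_mem_face (hmix (k+1)) j₀ 0 hface0))
        have hsame : Function.update (mix k) j₀ (if false then (1:ℝ) else 0)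
            = Function.update (mix (k+1)) j₀ (if false then (1:ℝ) else 0) := by
          rw [hupd, Function.update_idem]
        rw [ihk, e1, hsame, ← e2]
      · -- both near 1 : push both to 1
        have hface1 : (c j₀).elim ((1:ℝ) ∈ Set.Icc (0:ℝ) 1) (fun b => (1:ℝ) = if b then 1 else 0) := by
          cases hcj : c j₀ with
          | none => simp only [Option.elim]; norm_num
          | some b =>
            have hsj := hs j₀
            rw [hcj] at hsj
            simp only [Option.elim] at hsj ⊢
            cases b with
            | true => simp
            | false => norm_num at hsj; rw [hsj] at hse; linarith
        have e1 := htame (mix k) (hsub (hmix k)) j₀ true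
          (by simp only [if_true]
              rw [hmk]; exact abs_le.mpr ⟨by linarith, by linarith⟩)
          (by simp only [if_true]
              exact hsub (update_mem_face (hmix k) j₀ 1 hface1))
        have e2 := htame (mix (k+1)) (hsub (hmix (k+1))) j₀ true
          (by simp only [if_true]
              rw [hmk1]; exact abs_le.mpr ⟨by linarith, by linarith⟩)
          (by simp only [if_true]
              exact hsub (update_mem_face (hmix (k+1)) j₀ 1 hface1))
        have hsame : Function.update (mix k) j₀ (if true then (1:ℝ) else 0)
            = Function.update (mix (k+1)) j₀ (if true then (1:ℝ) else 0) := by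
          rw [hupd, Function.update_idem]
        rw [ihk, e1, hsame, ← e2]
  have hfin : mix n = t := by
    funext j
    simp [hmixdef, j.isLt]
  rw [← hfin]
  exact key n le_rfl

/-- Taming a map on a cubical subcomplex: `g = f ∘ Tⁿ_{σ,ε}` is a σ-tame map on `K`,
homotopic to `f` relative to the `ε`-chamber `K(ε)` via the straight-line homotopy,
and relative to any subcomplex `L` on which `f` is already `ε`-tame. -/
theorem stmt_7 {n : ℕ} {X : Type*} [TopologicalSpace X]
    (σ ε : ℝ) (hσ : 0 < σ) (hσε : σ < ε) (hε : ε ≤ 1 / 2)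
    (T : ℝ → ℝ) (hT_smooth : ContDiff ℝ (⊤ : ℕ∞) T) (hT_mono : Monotone T)
    (hT_mem : ∀ t : ℝ, T t ∈ Set.Icc (0 : ℝ) 1)
    (hT0 : ∀ t : ℝ, t ≤ σ → T t = 0)
    (hTid : ∀ t : ℝ, t ∈ Set.Icc ε (1 - ε) → T t = t)
    (hT1 : ∀ t : ℝ, 1 - σ ≤ t → T t = 1)
    (hTsym : ∀ t : ℝ, T (1 - t) = 1 - T t)
    (Tn : (Fin n → ℝ) → (Fin n → ℝ)) (hTn : ∀ t j, Tn t j = T (t j))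
    (S : Set (Fin n → Option Bool)) (f : (Fin n → ℝ) → X)
    (hf : ContinuousOn f (complexOf S))
    (g : (Fin n → ℝ) → X) (hg : ∀ t, g t = f (Tn t))
    (H : (Fin n → ℝ) × ℝ → X)
    (hH : ∀ (v : Fin n → ℝ) (u : ℝ), H (v, u) = f ((1 - u) • v + u • Tn v)) :
    (∀ t ∈ complexOf S, Tn t ∈ complexOf S) ∧
    IsTameOn σ g (complexOf S) ∧
    ContinuousOn H (complexOf S ×ˢ Set.Icc (0 : ℝ) 1) ∧
    (∀ v ∈ complexOf S, H (v, 0) = f v) ∧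
    (∀ v ∈ complexOf S, H (v, 1) = g v) ∧
    (∀ v ∈ chamberOf ε S, ∀ u ∈ Set.Icc (0 : ℝ) 1, H (v, u) = f v) ∧
    (∀ SL : Set (Fin n → Option Bool), SL ⊆ S → IsTameOn ε f (complexOf SL) →
      Set.EqOn g f (complexOf SL) ∧
      (∀ v ∈ complexOf SL, ∀ u ∈ Set.Icc (0 : ℝ) 1, H (v, u) = f v)) := by
  have hε0 : (0:ℝ) < ε := lt_trans hσ hσε
  have hT0' : T 0 = 0 := hT0 0 hσ.le
  have hT1' : T 1 = 1 := hT1 1 (by linarith)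
  have hTε : T ε = ε := hTid ε ⟨le_rfl, by linarith⟩
  have hTε' : T (1 - ε) = 1 - ε := hTid (1 - ε) ⟨by linarith, le_rfl⟩
  -- Tn preserves faces
  have hface : ∀ (c : Fin n → Option Bool), ∀ t ∈ face c, Tn t ∈ face c := by
    intro c t ht j
    have h := ht j
    cases hcj : c j with
    | none =>
      rw [hcj] at h
      simp only [Option.elim] at h ⊢
      rw [hTn]
      exact hT_mem (t j)
    | some b =>
      rw [hcj] at h
      simp only [Option.elim] at h ⊢
      rw [hTn, h]
      cases b <;> simp [hT0', hT1']
  have hK : ∀ t ∈ complexOf S, Tn t ∈ complexOf S := by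
    intro t ht
    rw [complexOf, Set.mem_iUnion₂] at ht ⊢
    obtain ⟨c, hc, htc⟩ := ht
    exact ⟨c, hc, hface c t htc⟩
  -- the straight-line segment stays in the face
  have happ : ∀ (t : Fin n → ℝ) (u : ℝ) (j : Fin n),
      ((1 - u) • t + u • Tn t) j = (1 - u) * t j + u * T (t j) := by
    intro t u j
    simp [hTn]
  have hseg : ∀ (c : Fin n → Option Bool), ∀ t ∈ face c, ∀ u ∈ Set.Icc (0:ℝ) 1,
      (1 - u) • t + u • Tn t ∈ face c := by
    intro c t ht u hu j
    obtain ⟨hu0, hu1⟩ := hu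
    have h := ht j
    cases hcj : c j with
    | none =>
      rw [hcj] at h
      simp only [Option.elim] at h ⊢
      rw [happ]
      obtain ⟨h0, h1⟩ := h
      obtain ⟨hT0m, hT1m⟩ := hT_mem (t j)
      constructor
      · nlinarith
      · nlinarith
    | some b =>
      rw [hcj] at h
      simp only [Option.elim] at h ⊢
      rw [happ, h]
      cases b <;> simp [hT0', hT1'] <;> ring
  -- σ-tameness of g
  have htameg : IsTameOn σ g (complexOf S) := by
    intro t ht j b habs hupd
    rw [hg, hg]
    congr 1
    funext j'
    rw [hTn, hTn]
    rcases eq_or_ne j' j with h | h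
    · subst h
      rw [Function.update_self]
      cases b with
      | false =>
        simp only [Bool.false_eq_true, if_false, sub_zero] at habs
        rw [hT0 (t j') (abs_le.mp habs).2]; simp [hT0']
      | true =>
        simp only [if_true] at habs
        have := (abs_le.mp habs).1
        rw [hT1 (t j') (by linarith)]; simp [hT1']
    · rw [Function.update_of_ne h]
  -- continuity of H
  have hTnc : Continuous Tn := by
    have hTn' : Tn = fun t j => T (t j) := funext fun t => funext fun j => hTn t j
    rw [hTn']
    exact continuous_pi fun j => hT_smooth.continuous.comp (continuous_apply j)
  have hφc : Continuous (fun p : (Fin n → ℝ) × ℝ => (1 - p.2) • p.1 + p.2 • Tn p.1) := by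
    exact ((continuous_const.sub continuous_snd).smul continuous_fst).add
      (continuous_snd.smul (hTnc.comp continuous_fst))
  have hHeq : H = f ∘ (fun p : (Fin n → ℝ) × ℝ => (1 - p.2) • p.1 + p.2 • Tn p.1) := by
    funext p
    obtain ⟨v, u⟩ := p
    exact hH v u
  have hmaps : Set.MapsTo (fun p : (Fin n → ℝ) × ℝ => (1 - p.2) • p.1 + p.2 • Tn p.1)
      (complexOf S ×ˢ Set.Icc (0:ℝ) 1) (complexOf S) := by
    rintro ⟨v, u⟩ ⟨hv, hu⟩
    rw [complexOf, Set.mem_iUnion₂] at hv ⊢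
    obtain ⟨c, hc, hvc⟩ := hv
    exact ⟨c, hc, hseg c v hvc u hu⟩
  have hHcont : ContinuousOn H (complexOf S ×ˢ Set.Icc (0:ℝ) 1) := by
    rw [hHeq]
    exact hf.comp hφc.continuousOn hmaps
  -- endpoints of the homotopy
  have hH0 : ∀ v ∈ complexOf S, H (v, 0) = f v := by
    intro v _
    rw [hH]
    norm_num
  have hH1 : ∀ v ∈ complexOf S, H (v, 1) = g v := by
    intro v _
    rw [hH, hg]
    norm_num
  -- stationarity on the chamber
  have hcham : ∀ v ∈ chamberOf ε S, ∀ u ∈ Set.Icc (0:ℝ) 1, H (v, u) = f v := by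
    intro v hv u _
    have hTnv : Tn v = v := by
      rw [chamberOf, Set.mem_iUnion₂] at hv
      obtain ⟨c, _, hvc⟩ := hv
      funext j
      rw [hTn]
      have h := hvc j
      cases hcj : c j with
      | none =>
        rw [hcj] at h
        simp only [Option.elim] at h
        exact hTid (v j) h
      | some b =>
        rw [hcj] at h
        simp only [Option.elim] at h
        rw [h]
        cases b <;> simp [hT0', hT1']
    rw [hH, hTnv, ← add_smul, sub_add_cancel, one_smul]
  refine ⟨hK, htameg, hHcont, hH0, hH1, hcham, ?_⟩
  -- relative part on a subcomplex where f is ε-tame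
  intro SL hSL htameL
  have key : ∀ v ∈ complexOf SL, ∀ u ∈ Set.Icc (0:ℝ) 1,
      f ((1 - u) • v + u • Tn v) = f v := by
    intro v hv u hu
    obtain ⟨hu0, hu1⟩ := hu
    rw [complexOf, Set.mem_iUnion₂] at hv
    obtain ⟨c, hc, hvc⟩ := hv
    have hsub : face c ⊆ complexOf SL := fun x hx => Set.mem_iUnion₂.mpr ⟨c, hc, hx⟩
    set w := (1 - u) • v + u • Tn v with hw
    have hwface : w ∈ face c := hseg c v hvc u ⟨hu0, hu1⟩
    refine tame_pair ε hε0 hε f (complexOf SL) htameL c hsub w v hwface hvc ?_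
    intro j
    have hwj : w j = (1 - u) * v j + u * T (v j) := happ v u j
    have hv01 : v j ∈ Set.Icc (0:ℝ) 1 := face_apply_mem hvc j
    obtain ⟨hv0, hv1⟩ := hv01
    have h := hvc j
    cases hcj : c j with
    | none =>
      rw [hcj] at h
      simp only [Option.elim] at h
      by_cases h1 : v j ≤ ε
      · right; left
        constructor
        · have hTle : T (v j) ≤ ε := by rw [← hTε]; exact hT_mono h1
          have hT0m : (0:ℝ) ≤ T (v j) := (hT_mem (v j)).1
          rw [hwj]; nlinarith
        · exact h1
      · by_cases h2 : 1 - ε ≤ v j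
        · right; right
          constructor
          · have hTge : 1 - ε ≤ T (v j) := by rw [← hTε']; exact hT_mono h2
            have hT1m : T (v j) ≤ 1 := (hT_mem (v j)).2
            rw [hwj]; nlinarith
          · exact h2
        · left
          rw [hwj, hTid (v j) ⟨le_of_not_ge h1, le_of_not_ge h2⟩]
          ring
    | some b =>
      rw [hcj] at h
      simp only [Option.elim] at h
      left
      rw [hwj, h]
      cases b <;> simp [hT0', hT1'] <;> ring
  constructor
  · intro v hv
    have hk := key v hv 1 ⟨zero_le_one, le_rfl⟩
    rw [hg]
    simpa using hk
  · intro v hv u hu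
    rw [hH]
    exact key v hv u hu
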